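/- Let s be a solution of the p-flow on [0,T). Then the minimum of the speed is non-decreasing in time: for all 0 ≤ t₁ ≤ t₂ < T, min over θ ∈ [0,2π] of v(θ,t₁) is less than or equal to min over θ ∈ [0,2π] of v(θ,t₂). -/

import Mathlib

open Real Set Filter MeasureTheory

noncomputable section

/-- Radius of curvature of the curve with support function `f`: `𝔯[f] = f'' + f`. -/
def rad (f : ℝ → ℝ) (θ : ℝ) : ℝ := iteratedDeriv 2 f θ + f θ

/-- The time domain `[0, T)`, where `0 < T ≤ ∞` is an extended real number. -/
def timeDom (T : EReal) : Set ℝ := {t : ℝ | 0 ≤ t ∧ (t : EReal) < T}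

/-- The speed `v(θ,t) = Ψ(θ) s(θ,t)^((2-2p)/(p+2)) 𝔯(θ,t)^(-p/(p+2))` of the `p`-flow. -/
def speed (p : ℝ) (Ψ : ℝ → ℝ) (s : ℝ → ℝ → ℝ) (θ t : ℝ) : ℝ :=
  Ψ θ * s θ t ^ ((2 - 2 * p) / (p + 2)) * rad (fun θ' => s θ' t) θ ^ (-p / (p + 2))

/-- `s : ℝ × [0,T) → ℝ` is a solution of the `p`-flow with weight `Ψ` on `[0, T)`,
`0 < T ≤ ∞`: it is smooth, `π`-periodic in `θ`, positive, has positive radius of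
curvature, and satisfies
`∂ₜ s = -Ψ(θ) s^((2-2p)/(p+2)) 𝔯^(-p/(p+2))`. -/
structure IsPFlow (p : ℝ) (Ψ : ℝ → ℝ) (T : EReal) (s : ℝ → ℝ → ℝ) : Prop where
  hp₁ : 1 < p
  hp₂ : p < 2
  hT : 0 < T
  hΨsmooth : ContDiff ℝ (⊤ : ℕ∞) Ψ
  hΨpos : ∀ θ, 0 < Ψ θ
  hΨper : Function.Periodic Ψ Real.pi
  hsmooth : ContDiffOn ℝ (⊤ : ℕ∞) (Function.uncurry s) (Set.univ ×ˢ timeDom T)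
  hper : ∀ t ∈ timeDom T, Function.Periodic (fun θ => s θ t) Real.pi
  hpos : ∀ θ : ℝ, ∀ t ∈ timeDom T, 0 < s θ t
  hconv : ∀ θ : ℝ, ∀ t ∈ timeDom T, 0 < rad (fun θ' => s θ' t) θ
  heq : ∀ θ : ℝ, ∀ t ∈ timeDom T,
    HasDerivWithinAt (fun τ => s θ τ) (-speed p Ψ s θ t) (timeDom T) t

/-- The area `A(t)` enclosed by the evolving curve. -/
def area (s : ℝ → ℝ → ℝ) (t : ℝ) : ℝ :=
  (1 / 2) * ∫ θ in (0:ℝ)..(2 * Real.pi), s θ t * rad (fun θ' => s θ' t) θ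

/-- The weighted `p`-affine length `Ω_p^Ψ(t)` of the evolving curve. -/
def wAffLen (p : ℝ) (Ψ : ℝ → ℝ) (s : ℝ → ℝ → ℝ) (t : ℝ) : ℝ :=
  ∫ θ in (0:ℝ)..(2 * Real.pi),
    Ψ θ * s θ t ^ ((2 - 2 * p) / (p + 2)) * rad (fun θ' => s θ' t) θ ^ ((2:ℝ) / (p + 2))

/-!
At a point where `v(·, t)` attains its minimum we have `∂θ² v ≥ 0`, and differentiating the
flow (`∂ₜ s = -v`, hence `∂ₜ 𝔯 = -(∂θ² v + v)`) gives
`∂ₜ v = v ((2p - 2)/(p + 2) · v/s + p/(p + 2) · (∂θ² v + v)/𝔯) > 0` there.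
Hamilton's trick turns this into monotonicity of `min_θ v(θ, t)`: for a short time `v` increases
near the spatial minimizers, while away from them it stays above the current minimum by
compactness; a continuous function that is locally nondecreasing to the right is monotone.
-/

open Topology
open scoped ContDiff

theorem monotoneOn_of_eventually_le_nhdsGT {f : ℝ → ℝ} {a b : ℝ}
    (hf : ContinuousOn f (Icc a b)) (h : ∀ t ∈ Ico a b, ∀ᶠ u in 𝓝[>] t, f t ≤ f u) :
    MonotoneOn f (Icc a b) := by
  intro x hx y hy hxy
  have hsub : Icc x y ⊆ Icc a b := Icc_subset_Icc hx.1 hy.2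
  have hclosed : IsClosed ({u | f x ≤ f u} ∩ Icc x y) := by
    rw [inter_comm]
    exact (hf.mono hsub).preimage_isClosed_of_isClosed isClosed_Icc isClosed_Ici
  refine hclosed.Icc_subset_of_forall_mem_nhdsWithin (le_refl (f x)) (fun u hu => ?_) ⟨hxy, le_rfl⟩
  exact (h u ⟨(hsub (Ico_subset_Icc_self hu.2)).1, hu.2.2.trans_le hy.2⟩).mono
    fun v hv => hu.1.trans hv

section MinOverCompactSpace

variable {X : Type*} [TopologicalSpace X] [CompactSpace X] {V W : ℝ → X → ℝ} {a b : ℝ}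

theorem continuousOn_iInf_of_compactSpace (hV : ContinuousOn ↿V (Icc a b ×ˢ univ)) :
    ContinuousOn (fun t => ⨅ θ, V t θ) (Icc a b) := by
  rw [continuousOn_iff_continuous_domRestrict]
  have hcont : Continuous ↿(fun (t : Icc a b) θ => V t θ) :=
    hV.comp_continuous (continuous_subtype_val.prodMap continuous_id) fun x => ⟨x.1.2, trivial⟩
  have h := isCompact_univ.continuous_sInf hcont
  simp only [image_univ, sInf_range] at h
  exact h

theorem exists_isOpen_argmin_subset_deriv_pos (hV : ContinuousOn ↿V (Icc a b ×ˢ univ))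
    (hW : ContinuousOn ↿W (Icc a b ×ˢ univ))
    (hpos : ∀ t ∈ Ico a b, ∀ θ, (∀ θ', V t θ ≤ V t θ') → 0 < W t θ)
    {t : ℝ} (ht : t ∈ Ico a b) :
    ∃ O : Set X, IsOpen O ∧ (∀ θ ∉ O, ⨅ θ', V t θ' < V t θ) ∧
      ∃ ε > 0, ∀ τ ∈ Icc a b, dist τ t < ε → ∀ θ ∈ O, 0 < W τ θ := by
  have htI : t ∈ Icc a b := Ico_subset_Icc_self ht
  have hVt : Continuous (V t) :=
    hV.comp_continuous (Continuous.prodMk_right t) fun θ => ⟨htI, trivial⟩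
  set Z := {θ | V t θ ≤ ⨅ θ', V t θ'}
  have hZ : IsCompact Z := (isClosed_le hVt continuous_const).isCompact
  have hWZ : ∀ᶠ x in 𝓝 t ×ˢ 𝓝ˢ Z, x.1 ∈ Icc a b → 0 < W x.1 x.2 := by
    rw [← nhdsSet_singleton, ← isCompact_singleton.nhdsSet_prod_eq hZ]
    refine mem_nhdsSet_iff_forall.2 ?_
    rintro ⟨τ, θ⟩ ⟨rfl, hθ⟩
    have hmin : ∀ θ', V τ θ ≤ V τ θ' :=
      fun θ' => hθ.trans (ciInf_le (isCompact_range hVt).bddBelow θ')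
    exact (eventually_nhdsWithin_iff.1 ((hW _ ⟨htI, trivial⟩).eventually
      (lt_mem_nhds (hpos τ ht θ hmin)))).mono fun x hx hxI => hx ⟨hxI, trivial⟩
  obtain ⟨P, hP, Q, hQ, hPQ⟩ := eventually_prod_iff.1 hWZ
  obtain ⟨O, hO, hZO, hOQ⟩ := mem_nhdsSet_iff_exists.1 hQ
  obtain ⟨ε, hε, hPε⟩ := Metric.eventually_nhds_iff_ball.1 hP
  exact ⟨O, hO, fun θ hθ => lt_of_not_ge fun h => hθ (hZO h), ε, hε,
    fun τ hτ hτt θ hθ => hPQ (hPε τ hτt) (hOQ hθ) hτ⟩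

variable [Nonempty X]

theorem eventually_iInf_le_iInf_nhdsGT (hV : ContinuousOn ↿V (Icc a b ×ˢ univ))
    (hW : ContinuousOn ↿W (Icc a b ×ˢ univ))
    (hVW : ∀ θ, ∀ t ∈ Ioo a b, HasDerivWithinAt (V · θ) (W t θ) (Icc a b) t)
    (hpos : ∀ t ∈ Ico a b, ∀ θ, (∀ θ', V t θ ≤ V t θ') → 0 < W t θ)
    {t : ℝ} (ht : t ∈ Ico a b) : ∀ᶠ u in 𝓝[>] t, ⨅ θ, V t θ ≤ ⨅ θ, V u θ := by
  have htI : t ∈ Icc a b := Ico_subset_Icc_self ht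
  have hbdd : BddBelow (range (V t)) := (isCompact_range
    (hV.comp_continuous (Continuous.prodMk_right t) fun θ => ⟨htI, trivial⟩)).bddBelow
  obtain ⟨O, hO, hVO, ε, hε, hWO⟩ := exists_isOpen_argmin_subset_deriv_pos hV hW hpos ht
  -- off `O`, the strict inequality `⨅ V t < V t θ` persists for a short time by compactness
  have hVOc : ∀ᶠ u in 𝓝 t, ∀ θ ∈ Oᶜ, u ∈ Icc a b → ⨅ θ', V t θ' < V u θ := by
    refine hO.isClosed_compl.isCompact.eventually_forall_of_forall_eventually fun θ hθ => ?_
    exact (eventually_nhdsWithin_iff.1 ((hV _ ⟨htI, trivial⟩).eventually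
      (lt_mem_nhds (hVO θ hθ)))).mono fun x hx hxI => hx ⟨hxI, trivial⟩
  filter_upwards [nhdsWithin_le_nhds hVOc,
    Ioo_mem_nhdsGT (lt_min (lt_add_of_pos_right t hε) ht.2)] with u hVu hu
  have huI : Icc t u ⊆ Icc a b := Icc_subset_Icc ht.1 (hu.2.le.trans (min_le_right _ _))
  refine le_ciInf fun θ => ?_
  by_cases hθ : θ ∈ O
  · have hmono : MonotoneOn (V · θ) (Icc t u) := by
      refine monotoneOn_of_hasDerivWithinAt_nonneg (convex_Icc t u)
        (hV.comp (continuousOn_id.prodMk continuousOn_const) fun τ hτ => ⟨huI hτ, trivial⟩)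
        (fun τ hτ => ?_) (fun τ hτ => ?_) (f' := fun τ => W τ θ)
      · rw [interior_Icc] at hτ ⊢
        exact (hVW θ τ ⟨ht.1.trans_lt hτ.1, hτ.2.trans_le (huI ⟨hu.1.le, le_rfl⟩).2⟩).mono
          (Ioo_subset_Icc_self.trans huI)
      · rw [interior_Icc] at hτ
        refine (hWO τ (huI (Ioo_subset_Icc_self hτ)) ?_ θ hθ).le
        rw [Real.dist_eq, abs_lt]
        constructor <;> linarith [hτ.1, hτ.2, hu.2.trans_le (min_le_left _ _)]
    exact (ciInf_le hbdd θ).trans (hmono ⟨le_rfl, hu.1.le⟩ ⟨hu.1.le, le_rfl⟩ hu.1.le)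
  · exact (hVu θ hθ (huI ⟨hu.1.le, le_rfl⟩)).le

theorem monotoneOn_iInf_of_hasDerivWithinAt_pos_of_isMin
    (hV : ContinuousOn ↿V (Icc a b ×ˢ univ)) (hW : ContinuousOn ↿W (Icc a b ×ˢ univ))
    (hVW : ∀ θ, ∀ t ∈ Ioo a b, HasDerivWithinAt (V · θ) (W t θ) (Icc a b) t)
    (hpos : ∀ t ∈ Ico a b, ∀ θ, (∀ θ', V t θ ≤ V t θ') → 0 < W t θ) :
    MonotoneOn (fun t => ⨅ θ, V t θ) (Icc a b) :=
  monotoneOn_of_eventually_le_nhdsGT (continuousOn_iInf_of_compactSpace hV)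
    fun _ ht => eventually_iInf_le_iInf_nhdsGT hV hW hVW hpos ht

end MinOverCompactSpace

theorem IsLocalMin.deriv_deriv_nonneg {f : ℝ → ℝ} {x : ℝ} (h : IsLocalMin f x)
    (hc : ContinuousAt f x) : 0 ≤ deriv (deriv f) x := by
  by_contra! hneg
  -- then `x` is also a local maximum, so `f` is constant near `x`
  have hconst : f =ᶠ[𝓝 x] fun _ => f x :=
    (h.and (isLocalMax_of_deriv_deriv_neg hneg h.deriv_eq_zero hc)).mono
      fun y hy => le_antisymm hy.2 hy.1
  have hderiv : deriv f =ᶠ[𝓝 x] fun _ => 0 :=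
    hconst.eventuallyEq_nhds.mono fun y hy => by rw [hy.deriv_eq, deriv_const]
  rw [hderiv.deriv_eq, deriv_const] at hneg
  exact lt_irrefl 0 hneg

section Strip

variable {I : Set ℝ} {F : ℝ × ℝ → ℝ} {f g : ℝ → ℝ → ℝ}

theorem hasDerivAt_fst_of_differentiableOn_strip (hF : DifferentiableOn ℝ F (univ ×ˢ I))
    {t : ℝ} (ht : t ∈ I) (θ : ℝ) :
    HasDerivAt (fun θ' => F (θ', t)) (fderivWithin ℝ F (univ ×ˢ I) (θ, t) (1, 0)) θ := by
  have hline : HasFDerivAt (fun θ' : ℝ => (θ', t)) ((ContinuousLinearMap.id ℝ ℝ).prod 0) θ :=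
    (hasFDerivAt_id θ).prodMk (hasFDerivAt_const t θ)
  have h := (hF _ ⟨trivial, ht⟩).hasFDerivWithinAt.comp θ (hline.hasFDerivWithinAt (s := univ))
    (fun _ _ => ⟨trivial, ht⟩)
  exact (hasFDerivWithinAt_univ.1 h).hasDerivAt

theorem hasDerivWithinAt_snd_of_differentiableOn_strip (hF : DifferentiableOn ℝ F (univ ×ˢ I))
    (θ : ℝ) {t : ℝ} (ht : t ∈ I) :
    HasDerivWithinAt (fun τ => F (θ, τ)) (fderivWithin ℝ F (univ ×ˢ I) (θ, t) (0, 1)) I t := by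
  have hline : HasFDerivAt (fun τ : ℝ => (θ, τ)) ((0 : ℝ →L[ℝ] ℝ).prod (.id ℝ ℝ)) t :=
    (hasFDerivAt_const θ t).prodMk (hasFDerivAt_id t)
  exact ((hF _ ⟨trivial, ht⟩).hasFDerivWithinAt.comp t hline.hasFDerivWithinAt
    (fun _ hτ => ⟨trivial, hτ⟩)).hasDerivWithinAt

theorem contDiffOn_deriv_fst_of_strip {m n : WithTop ℕ∞} (hI : UniqueDiffOn ℝ I)
    (hf : ContDiffOn ℝ n ↿f (univ ×ˢ I)) (hmn : m + 1 ≤ n) :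
    ContDiffOn ℝ m ↿(fun θ t => deriv (f · t) θ) (univ ×ˢ I) := by
  have hD := (hf.fderivWithin (uniqueDiffOn_univ.prod hI) hmn).clm_apply
    (contDiffOn_const (c := ((1, 0) : ℝ × ℝ)))
  refine hD.congr fun x hx => ?_
  exact (hasDerivAt_fst_of_differentiableOn_strip
    (hf.differentiableOn (by rintro rfl; simp at hmn)) hx.2 x.1).deriv

theorem contDiffOn_rad_of_strip (hI : UniqueDiffOn ℝ I) (hf : ContDiffOn ℝ ∞ ↿f (univ ×ˢ I)) :
    ContDiffOn ℝ ∞ ↿(fun θ t => rad (f · t) θ) (univ ×ˢ I) := by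
  have h2 := contDiffOn_deriv_fst_of_strip (m := ∞) hI
    (contDiffOn_deriv_fst_of_strip (m := ∞) hI hf (by simp)) (by simp)
  simp only [rad, iteratedDeriv_succ, iteratedDeriv_zero]
  exact h2.add hf

theorem hasDerivWithinAt_deriv_fst_of_strip (hI : UniqueDiffOn ℝ I)
    (hI' : I ⊆ closure (interior I)) (hf : ContDiffOn ℝ 2 ↿f (univ ×ˢ I))
    (hfg : ∀ θ, ∀ t ∈ I, HasDerivWithinAt (f θ) (g θ t) I t) (θ : ℝ) {t : ℝ} (ht : t ∈ I) :
    HasDerivWithinAt (fun τ => deriv (f · τ) θ) (deriv (g · t) θ) I t := by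
  set S := univ ×ˢ I
  have hS : UniqueDiffOn ℝ S := uniqueDiffOn_univ.prod hI
  have hx : (θ, t) ∈ S := ⟨trivial, ht⟩
  have hdiff : DifferentiableOn ℝ ↿f S := hf.differentiableOn two_ne_zero
  -- `D x (1, 0)` and `D x (0, 1)` are the `θ`- and `t`-partial derivatives of `f` at `x`
  set D := fderivWithin ℝ ↿f S
  have hD : DifferentiableOn ℝ D S :=
    (hf.fderivWithin hS (m := 1) (by norm_num)).differentiableOn one_ne_zero
  have hDv : ∀ v, DifferentiableOn ℝ (fun y => D y v) S :=
    fun v => hD.clm_apply (differentiableOn_const v)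
  have hDapply : ∀ v w, fderivWithin ℝ (fun y => D y v) S (θ, t) w =
      fderivWithin ℝ D S (θ, t) w v := by
    intro v w
    rw [fderivWithin_clm_apply (hS _ hx) (hD _ hx) (differentiableWithinAt_const v)]
    simp
  have hx' : (θ, t) ∈ closure (interior S) := by
    rw [interior_prod_eq, closure_prod_eq, interior_univ, closure_univ]
    exact ⟨trivial, hI' ht⟩
  have hsymm : fderivWithin ℝ D S (θ, t) (0, 1) (1, 0) = fderivWithin ℝ D S (θ, t) (1, 0) (0, 1) :=
    (hf.contDiffWithinAt hx).isSymmSndFDerivWithinAt (by simp) hS hx' hx _ _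
  have hg : (g · t) = fun θ' => D (θ', t) (0, 1) := funext fun θ' =>
    (hI t ht).eq_deriv _ (hfg θ' t ht) (hasDerivWithinAt_snd_of_differentiableOn_strip hdiff θ' ht)
  rw [hg, (hasDerivAt_fst_of_differentiableOn_strip (hDv (0, 1)) ht θ).deriv, hDapply, ← hsymm,
    ← hDapply]
  exact (hasDerivWithinAt_snd_of_differentiableOn_strip (hDv (1, 0)) θ ht).congr
    (fun τ hτ => (hasDerivAt_fst_of_differentiableOn_strip hdiff hτ θ).deriv)
    (hasDerivAt_fst_of_differentiableOn_strip hdiff ht θ).deriv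

theorem hasDerivWithinAt_rad_of_strip (hI : UniqueDiffOn ℝ I)
    (hI' : I ⊆ closure (interior I)) (hf : ContDiffOn ℝ 3 ↿f (univ ×ˢ I))
    (hfg : ∀ θ, ∀ t ∈ I, HasDerivWithinAt (f θ) (g θ t) I t) (θ : ℝ) {t : ℝ} (ht : t ∈ I) :
    HasDerivWithinAt (fun τ => rad (f · τ) θ) (rad (g · t) θ) I t := by
  have h1 := hasDerivWithinAt_deriv_fst_of_strip hI hI'
    (contDiffOn_deriv_fst_of_strip hI hf (by norm_num))
    (fun θ' _ hτ => hasDerivWithinAt_deriv_fst_of_strip hI hI' (hf.of_le (by norm_num)) hfg θ' hτ)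
    θ ht
  simp only [rad, iteratedDeriv_succ, iteratedDeriv_zero]
  exact h1.add (hfg θ t ht)

end Strip

theorem Function.Periodic.rad {f : ℝ → ℝ} {c : ℝ} (h : Function.Periodic f c) :
    Function.Periodic (rad f) c := by
  intro θ
  have hderiv := congrFun (iteratedDeriv_comp_add_const 2 f c) θ
  simp only [funext h] at hderiv
  simp only [_root_.rad, h θ, hderiv]

theorem convex_timeDom (T : EReal) : Convex ℝ (timeDom T) := by
  rw [convex_iff_ordConnected]
  exact ⟨fun x hx y hy z hz => ⟨hx.1.trans hz.1, (EReal.coe_le_coe_iff.2 hz.2).trans_lt hy.2⟩⟩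

theorem interior_timeDom_nonempty {T : EReal} (hT : 0 < T) : (interior (timeDom T)).Nonempty := by
  obtain ⟨x, hx0, hxT⟩ := EReal.lt_iff_exists_real_btwn.1 hT
  have hsub : Ioo 0 x ⊆ timeDom T :=
    fun t ht => ⟨ht.1.le, (EReal.coe_lt_coe_iff.2 ht.2).trans hxT⟩
  exact (nonempty_Ioo.2 (by exact_mod_cast hx0)).mono (isOpen_Ioo.subset_interior_iff.2 hsub)

theorem uniqueDiffOn_timeDom {T : EReal} (hT : 0 < T) : UniqueDiffOn ℝ (timeDom T) :=
  uniqueDiffOn_convex (convex_timeDom T) (interior_timeDom_nonempty hT)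

theorem timeDom_subset_closure_interior {T : EReal} (hT : 0 < T) :
    timeDom T ⊆ closure (interior (timeDom T)) := by
  rw [(convex_timeDom T).closure_interior_eq_closure_of_nonempty_interior
    (interior_timeDom_nonempty hT)]
  exact subset_closure

def speedDeriv (p : ℝ) (Ψ : ℝ → ℝ) (s : ℝ → ℝ → ℝ) (θ t : ℝ) : ℝ :=
  speed p Ψ s θ t * ((2 * p - 2) / (p + 2) * speed p Ψ s θ t / s θ t +
    p / (p + 2) * rad (speed p Ψ s · t) θ / rad (s · t) θ)

namespace IsPFlow

variable {p : ℝ} {Ψ : ℝ → ℝ} {T : EReal} {s : ℝ → ℝ → ℝ}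

theorem contDiffOn_rad (hflow : IsPFlow p Ψ T s) :
    ContDiffOn ℝ ∞ ↿(fun θ t => rad (s · t) θ) (univ ×ˢ timeDom T) :=
  contDiffOn_rad_of_strip (uniqueDiffOn_timeDom hflow.hT) hflow.hsmooth

theorem speed_pos (hflow : IsPFlow p Ψ T s) (θ : ℝ) {t : ℝ} (ht : t ∈ timeDom T) :
    0 < speed p Ψ s θ t :=
  mul_pos (mul_pos (hflow.hΨpos θ) (rpow_pos_of_pos (hflow.hpos θ t ht) _))
    (rpow_pos_of_pos (hflow.hconv θ t ht) _)

theorem contDiffOn_speed (hflow : IsPFlow p Ψ T s) :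
    ContDiffOn ℝ ∞ ↿(fun θ t => speed p Ψ s θ t) (univ ×ˢ timeDom T) :=
  ((hflow.hΨsmooth.comp contDiff_fst).contDiffOn.mul
    (hflow.hsmooth.rpow_const_of_ne fun x hx => (hflow.hpos x.1 x.2 hx.2).ne')).mul
    (hflow.contDiffOn_rad.rpow_const_of_ne fun x hx => (hflow.hconv x.1 x.2 hx.2).ne')

theorem hasDerivWithinAt_rad (hflow : IsPFlow p Ψ T s) (θ : ℝ) {t : ℝ} (ht : t ∈ timeDom T) :
    HasDerivWithinAt (fun τ => rad (s · τ) θ) (-rad (speed p Ψ s · t) θ) (timeDom T) t := by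
  have h := hasDerivWithinAt_rad_of_strip (uniqueDiffOn_timeDom hflow.hT)
    (timeDom_subset_closure_interior hflow.hT) (hflow.hsmooth.of_le (by decide))
    (g := fun θ t => -speed p Ψ s θ t) hflow.heq θ ht
  simpa only [_root_.rad, iteratedDeriv_fun_neg, neg_add] using h

theorem hasDerivWithinAt_speed (hflow : IsPFlow p Ψ T s) (θ : ℝ) {t : ℝ} (ht : t ∈ timeDom T) :
    HasDerivWithinAt (fun τ => speed p Ψ s θ τ) (speedDeriv p Ψ s θ t) (timeDom T) t := by
  have hs := hflow.hpos θ t ht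
  have hr := hflow.hconv θ t ht
  have h := ((hflow.heq θ t ht).rpow_const (p := (2 - 2 * p) / (p + 2)) (Or.inl hs.ne')
    |>.const_mul (Ψ θ)).mul
    ((hflow.hasDerivWithinAt_rad θ ht).rpow_const (p := -p / (p + 2)) (Or.inl hr.ne'))
  refine h.congr_deriv ?_
  rw [rpow_sub_one hs.ne', rpow_sub_one hr.ne']
  simp only [speedDeriv, speed]
  field_simp
  ring

theorem speed_periodic (hflow : IsPFlow p Ψ T s) {t : ℝ} (ht : t ∈ timeDom T) :
    Function.Periodic (speed p Ψ s · t) π := by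
  intro θ
  simp only [speed, hflow.hΨper θ, hflow.hper t ht θ, (hflow.hper t ht).rad θ]

theorem continuousOn_speedDeriv (hflow : IsPFlow p Ψ T s) :
    ContinuousOn ↿(fun θ t => speedDeriv p Ψ s θ t) (univ ×ˢ timeDom T) := by
  have hv := hflow.contDiffOn_speed.continuousOn
  have hrv := (contDiffOn_rad_of_strip (uniqueDiffOn_timeDom hflow.hT)
    hflow.contDiffOn_speed).continuousOn
  exact hv.mul (((continuousOn_const.mul hv).div hflow.hsmooth.continuousOn
    fun x hx => (hflow.hpos x.1 x.2 hx.2).ne').add ((continuousOn_const.mul hrv).div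
    hflow.contDiffOn_rad.continuousOn fun x hx => (hflow.hconv x.1 x.2 hx.2).ne'))

theorem speedDeriv_pos_of_isMinOn (hflow : IsPFlow p Ψ T s) {θ t : ℝ} (ht : t ∈ timeDom T)
    (hmin : IsMinOn (speed p Ψ s · t) (Icc 0 (2 * π)) θ) : 0 < speedDeriv p Ψ s θ t := by
  have hv := hflow.speed_pos θ ht
  have hlocMin : IsLocalMin (speed p Ψ s · t) θ := Filter.Eventually.of_forall fun θ' => by
    obtain ⟨y, hy, hθy⟩ := (hflow.speed_periodic ht).exists_mem_Ico₀ pi_pos θ'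
    show speed p Ψ s θ t ≤ speed p Ψ s θ' t
    rw [hθy]
    exact hmin ⟨hy.1, by linarith [hy.2, pi_pos]⟩
  have hcont : ContinuousAt (speed p Ψ s · t) θ :=
    (hasDerivAt_fst_of_differentiableOn_strip (hflow.contDiffOn_speed.differentiableOn
      (by simp)) ht θ).continuousAt
  have hrv : 0 < rad (speed p Ψ s · t) θ := by
    have := hlocMin.deriv_deriv_nonneg hcont
    simp only [_root_.rad, iteratedDeriv_succ, iteratedDeriv_zero]
    linarith
  have hA : 0 < (2 * p - 2) / (p + 2) := div_pos (by linarith [hflow.hp₁]) (by linarith [hflow.hp₁])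
  have hB : 0 < p / (p + 2) := div_pos (by linarith [hflow.hp₁]) (by linarith [hflow.hp₁])
  exact mul_pos hv (add_pos (div_pos (mul_pos hA hv) (hflow.hpos θ t ht))
    (div_pos (mul_pos hB hrv) (hflow.hconv θ t ht)))

end IsPFlow

theorem ContinuousOn.comp_swap_subtype {F : ℝ → ℝ → ℝ} {I J K : Set ℝ}
    (hF : ContinuousOn ↿F (univ ×ˢ I)) (hJ : J ⊆ I) :
    ContinuousOn ↿(fun t (θ : K) => F θ t) (J ×ˢ univ) :=
  hF.comp (continuous_subtype_val.comp continuous_snd |>.prodMk continuous_fst).continuousOn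
    fun _ hx => ⟨trivial, hJ hx.1⟩

theorem min_speed_nondecreasing (p : ℝ) (Ψ : ℝ → ℝ) (T : EReal) (s : ℝ → ℝ → ℝ)
    (hflow : IsPFlow p Ψ T s) :
    ∀ t₁ ∈ timeDom T, ∀ t₂ ∈ timeDom T, t₁ ≤ t₂ →
      sInf ((fun θ => speed p Ψ s θ t₁) '' Icc 0 (2 * π)) ≤
        sInf ((fun θ => speed p Ψ s θ t₂) '' Icc 0 (2 * π)) := by
  intro t₁ ht₁ t₂ ht₂ hle
  have hsub : Icc t₁ t₂ ⊆ timeDom T := (convex_timeDom T).ordConnected.out ht₁ ht₂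
  have : Nonempty (Icc 0 (2 * π)) := ⟨⟨0, le_rfl, by positivity⟩⟩
  have hmono := monotoneOn_iInf_of_hasDerivWithinAt_pos_of_isMin (X := Icc 0 (2 * π))
    (V := fun t θ => speed p Ψ s θ t) (W := fun t θ => speedDeriv p Ψ s θ t)
    (hflow.contDiffOn_speed.continuousOn.comp_swap_subtype hsub)
    (hflow.continuousOn_speedDeriv.comp_swap_subtype hsub)
    (fun θ t ht => (hflow.hasDerivWithinAt_speed θ (hsub (Ioo_subset_Icc_self ht))).mono hsub)
    (fun t ht θ hθ => hflow.speedDeriv_pos_of_isMinOn (hsub (Ico_subset_Icc_self ht))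
      fun θ' hθ' => hθ ⟨θ', hθ'⟩)
  simpa only [sInf_image'] using hmono ⟨le_rfl, hle⟩ ⟨hle, le_rfl⟩ hle

end
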